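/- Suppose for every interval J in the geometric covering the algorithm's regret over J satisfies Regret(J) ≤ a·|J|^{1/2} + b·|J|^{3/4} for constants a, b ≥ 0. Then for any interval I = [s, s+τ-1] ⊆ [T], the regret over I satisfies Regret(I) ≤ 8a·τ^{1/2} + 6b·τ^{3/4}. -/

import Mathlib

/-!
Cut `[s, s + τ)` at the largest multiple `m` of `2 ^ K`, `K = ⌊log₂ τ⌋`, that it contains.
Greedily peeling the largest possible dyadic block off the outer end of `[s, m)` and of `[m, s + τ)`
splits each of them into covering intervals of pairwise distinct power-of-two lengths at most
`2 ^ K ≤ τ`, so by subadditivity the regret over each part is at most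
`∑_{k ≤ K} (a 2^{k/2} + b 2^{3k/4})`, a geometric sum bounded by `4a τ^{1/2} + 3b τ^{3/4}`.
-/

/-- The geometric covering intervals of Daniely et al. (2015). -/
def GCIntervals : Set (Finset ℕ) :=
  {A | ∃ k i : ℕ, A = Finset.Icc (i * 2 ^ k) ((i + 1) * 2 ^ k - 1)}

open Finset

lemma Ico_mem_GCIntervals {k s : ℕ} (h : 2 ^ k ∣ s) : Ico s (s + 2 ^ k) ∈ GCIntervals := by
  obtain ⟨i, rfl⟩ := h
  refine ⟨k, i, ?_⟩
  ext x
  simp only [mem_Ico, mem_Icc]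
  rw [add_one_mul, mul_comm i]
  have : 0 < 2 ^ k := Nat.two_pow_pos k
  omega

lemma Nat.log_two_sub_two_pow_log_lt {n : ℕ} (h : 2 ^ Nat.log 2 n < n) :
    Nat.log 2 (n - 2 ^ Nat.log 2 n) < Nat.log 2 n := by
  have := Nat.lt_pow_succ_log_self one_lt_two n
  rw [pow_succ] at this
  exact Nat.log_lt_of_lt_pow (by omega) (by omega)

lemma apply_Ico_le_add_apply_Ico {R : Finset ℕ → ℝ}
    (hsub : ∀ A B : Finset ℕ, Disjoint A B → R (A ∪ B) ≤ R A + R B) {s m e : ℕ}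
    (hsm : s ≤ m) (hme : m ≤ e) : R (Ico s e) ≤ R (Ico s m) + R (Ico m e) := by
  rw [← Ico_union_Ico_eq_Ico hsm hme]
  exact hsub _ _ (Ico_disjoint_Ico_consecutive s m e)

/-- The bound accumulated along dyadic blocks of pairwise distinct lengths `< 2 ^ K`. -/
noncomputable def dyadicSum (f : ℕ → ℝ) (K : ℕ) : ℝ := ∑ k ∈ range K, f (2 ^ k)

lemma dyadicSum_succ (f : ℕ → ℝ) (K : ℕ) : dyadicSum f (K + 1) = dyadicSum f K + f (2 ^ K) :=
  sum_range_succ _ _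

lemma dyadicSum_mono {f : ℕ → ℝ} (hf : ∀ n, 0 ≤ f n) : Monotone (dyadicSum f) :=
  fun _ _ h ↦ sum_le_sum_of_subset_of_nonneg (range_subset_range.2 h) fun _ _ _ ↦ hf _

lemma dyadicSum_nonneg {f : ℕ → ℝ} (hf : ∀ n, 0 ≤ f n) (K : ℕ) : 0 ≤ dyadicSum f K :=
  sum_nonneg fun _ _ ↦ hf _

section Phases

variable {R : Finset ℕ → ℝ} {f : ℕ → ℝ}

lemma apply_Ico_two_pow_le (hGC : ∀ J ∈ GCIntervals, R J ≤ f J.card) {k s : ℕ}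
    (h : 2 ^ k ∣ s) : R (Ico s (s + 2 ^ k)) ≤ f (2 ^ k) := by
  simpa using hGC _ (Ico_mem_GCIntervals h)

/-- Decreasing phase: peel the largest dyadic block off the left end. -/
theorem le_dyadicSum_of_dvd_start
    (hsub : ∀ A B : Finset ℕ, Disjoint A B → R (A ∪ B) ≤ R A + R B)
    (hGC : ∀ J ∈ GCIntervals, R J ≤ f J.card) (hf : ∀ n, 0 ≤ f n)
    {n : ℕ} (hn : 0 < n) {s : ℕ} (hs : 2 ^ Nat.log 2 n ∣ s) :
    R (Ico s (s + n)) ≤ dyadicSum f (Nat.log 2 n + 1) := by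
  induction n using Nat.strong_induction_on generalizing s with
  | _ n ih =>
  set K := Nat.log 2 n with hK
  rw [dyadicSum_succ]
  obtain hKn | hKn := (show 2 ^ K ≤ n from Nat.pow_log_le_self 2 hn.ne').eq_or_lt
  · rw [← hKn]
    linarith [apply_Ico_two_pow_le hGC hs, dyadicSum_nonneg hf K]
  · have hr : Nat.log 2 (n - 2 ^ K) < K := by
      simpa only [← hK] using Nat.log_two_sub_two_pow_log_lt hKn
    have hrest := ih (n - 2 ^ K) (by omega) (by omega) (s := s + 2 ^ K)
      (dvd_add ((pow_dvd_pow 2 hr.le).trans hs) (pow_dvd_pow 2 hr.le))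
    rw [add_assoc, Nat.add_sub_cancel' hKn.le] at hrest
    calc R (Ico s (s + n))
        ≤ R (Ico s (s + 2 ^ K)) + R (Ico (s + 2 ^ K) (s + n)) :=
          apply_Ico_le_add_apply_Ico hsub (by omega) (by omega)
      _ ≤ f (2 ^ K) + dyadicSum f K :=
        add_le_add (apply_Ico_two_pow_le hGC hs) (hrest.trans (dyadicSum_mono hf hr))
      _ = dyadicSum f K + f (2 ^ K) := add_comm _ _

/-- Increasing phase: peel the largest dyadic block off the right end. -/
theorem le_dyadicSum_of_dvd_end
    (hsub : ∀ A B : Finset ℕ, Disjoint A B → R (A ∪ B) ≤ R A + R B)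
    (hGC : ∀ J ∈ GCIntervals, R J ≤ f J.card) (hf : ∀ n, 0 ≤ f n)
    {n : ℕ} (hn : 0 < n) {s : ℕ} (hs : 2 ^ Nat.log 2 n ∣ s + n) :
    R (Ico s (s + n)) ≤ dyadicSum f (Nat.log 2 n + 1) := by
  induction n using Nat.strong_induction_on generalizing s with
  | _ n ih =>
  set K := Nat.log 2 n with hK
  rw [dyadicSum_succ]
  obtain hKn | hKn := (show 2 ^ K ≤ n from Nat.pow_log_le_self 2 hn.ne').eq_or_lt
  · rw [← hKn] at hs ⊢
    linarith [apply_Ico_two_pow_le hGC ((Nat.dvd_add_left (dvd_refl _)).mp hs),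
      dyadicSum_nonneg hf K]
  · have hr : Nat.log 2 (n - 2 ^ K) < K := by
      simpa only [← hK] using Nat.log_two_sub_two_pow_log_lt hKn
    have hsplit : s + (n - 2 ^ K) + 2 ^ K = s + n := by omega
    have hm : 2 ^ K ∣ s + (n - 2 ^ K) := (Nat.dvd_add_left (dvd_refl _)).mp (hsplit ▸ hs)
    have hrest := ih (n - 2 ^ K) (by omega) (by omega) ((pow_dvd_pow 2 hr.le).trans hm)
    have hblock := apply_Ico_two_pow_le hGC hm
    rw [hsplit] at hblock
    calc R (Ico s (s + n))
        ≤ R (Ico s (s + (n - 2 ^ K))) + R (Ico (s + (n - 2 ^ K)) (s + n)) :=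
          apply_Ico_le_add_apply_Ico hsub (by omega) (by omega)
      _ ≤ dyadicSum f K + f (2 ^ K) := add_le_add (hrest.trans (dyadicSum_mono hf hr)) hblock

/-- Cutting at the largest multiple of `2 ^ Nat.log 2 n` in the interval leaves an increasing
phase on the left and a decreasing phase on the right. -/
theorem le_two_mul_dyadicSum
    (hsub : ∀ A B : Finset ℕ, Disjoint A B → R (A ∪ B) ≤ R A + R B)
    (hGC : ∀ J ∈ GCIntervals, R J ≤ f J.card) (hf : ∀ n, 0 ≤ f n)
    {n : ℕ} (hn : 0 < n) (s : ℕ) :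
    R (Ico s (s + n)) ≤ 2 * dyadicSum f (Nat.log 2 n + 1) := by
  set K := Nat.log 2 n
  have hKn : 2 ^ K ≤ n := Nat.pow_log_le_self 2 hn.ne'
  set r := (s + n) % 2 ^ K
  have hrK : r < 2 ^ K := Nat.mod_lt _ (Nat.two_pow_pos K)
  have hcut : 2 ^ K ∣ s + (n - r) := by
    rw [← Nat.add_sub_assoc (by omega)]
    exact Nat.dvd_sub_mod _
  have hdvd {l : ℕ} (hl : l ≤ n) : 2 ^ Nat.log 2 l ∣ s + (n - r) :=
    (pow_dvd_pow 2 (Nat.log_mono_right hl)).trans hcut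
  have hmono {l : ℕ} (hl : l ≤ n) : dyadicSum f (Nat.log 2 l + 1) ≤ dyadicSum f (K + 1) :=
    dyadicSum_mono hf (Nat.add_le_add_right (Nat.log_mono_right hl) 1)
  have hleft := (le_dyadicSum_of_dvd_end hsub hGC hf (n := n - r) (s := s) (by omega)
    (hdvd (by omega))).trans (hmono (by omega))
  obtain hr | hr := Nat.eq_zero_or_pos r
  · rw [hr, Nat.sub_zero] at hleft
    linarith [dyadicSum_nonneg hf (K + 1)]
  · have hright := (le_dyadicSum_of_dvd_start hsub hGC hf hr (hdvd (by omega))).trans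
      (hmono (by omega))
    rw [add_assoc, Nat.sub_add_cancel (by omega)] at hright
    calc R (Ico s (s + n))
        ≤ R (Ico s (s + (n - r))) + R (Ico (s + (n - r)) (s + n)) :=
          apply_Ico_le_add_apply_Ico hsub (by omega) (by omega)
      _ ≤ 2 * dyadicSum f (K + 1) := by linarith

end Phases

lemma geom_sum_le_mul_pow {q c : ℝ} (hq : 1 < q) (hc : q ≤ c * (q - 1)) (K : ℕ) :
    ∑ i ∈ range (K + 1), q ^ i ≤ c * q ^ K := by
  have hqK : 0 < q ^ K := pow_pos (by linarith) K
  refine le_of_mul_le_mul_right ?_ (sub_pos.2 hq)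
  rw [geom_sum_mul, pow_succ]
  nlinarith [mul_le_mul_of_nonneg_left hc hqK.le]

lemma dyadicSum_rpow_le {a b : ℝ} (ha : 0 ≤ a) (hb : 0 ≤ b) (K : ℕ) :
    dyadicSum (fun n : ℕ ↦ a * (n : ℝ) ^ ((1 : ℝ) / 2) + b * (n : ℝ) ^ ((3 : ℝ) / 4)) (K + 1) ≤
      4 * a * ((2 ^ K : ℕ) : ℝ) ^ ((1 : ℝ) / 2) + 3 * b * ((2 ^ K : ℕ) : ℝ) ^ ((3 : ℝ) / 4) := by
  have hpow (p : ℝ) (k : ℕ) : ((2 ^ k : ℕ) : ℝ) ^ p = ((2 : ℝ) ^ p) ^ k := by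
    rw [Nat.cast_pow, Nat.cast_ofNat, Real.rpow_pow_comm zero_le_two]
  have hsqrt : (4 / 3 : ℝ) ≤ 2 ^ ((1 : ℝ) / 2) := by
    rw [← Real.sqrt_eq_rpow]
    exact Real.le_sqrt_of_sq_le (by norm_num)
  have hquart : (3 / 2 : ℝ) ≤ 2 ^ ((3 : ℝ) / 4) := by
    refine le_of_pow_le_pow_left₀ (n := 4) (by norm_num) (by positivity) ?_
    rw [← Real.rpow_mul_natCast zero_le_two]
    norm_num
  have h1 := geom_sum_le_mul_pow (q := 2 ^ ((1 : ℝ) / 2)) (c := 4) (by linarith) (by linarith) K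
  have h2 := geom_sum_le_mul_pow (q := 2 ^ ((3 : ℝ) / 4)) (c := 3) (by linarith) (by linarith) K
  simp only [dyadicSum, hpow, sum_add_distrib, ← mul_sum]
  nlinarith [mul_le_mul_of_nonneg_left h1 ha, mul_le_mul_of_nonneg_left h2 hb]

theorem strongly_adaptive_regret_from_covering_general (R : Finset ℕ → ℝ) (a b : ℝ)
    (ha : 0 ≤ a) (hb : 0 ≤ b)
    (hsub : ∀ A B : Finset ℕ, Disjoint A B → R (A ∪ B) ≤ R A + R B)
    (hGC : ∀ J ∈ GCIntervals,
      R J ≤ a * (J.card : ℝ) ^ ((1 : ℝ) / 2) + b * (J.card : ℝ) ^ ((3 : ℝ) / 4))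
    (s τ : ℕ) (hτ : 1 ≤ τ) :
    R (Finset.Icc s (s + τ - 1)) ≤
      8 * a * (τ : ℝ) ^ ((1 : ℝ) / 2) + 6 * b * (τ : ℝ) ^ ((3 : ℝ) / 4) := by
  have hcover := le_two_mul_dyadicSum (f := fun n : ℕ ↦ a * (n : ℝ) ^ ((1 : ℝ) / 2) +
    b * (n : ℝ) ^ ((3 : ℝ) / 4)) hsub hGC (fun n ↦ by positivity) hτ s
  have hsum := dyadicSum_rpow_le ha hb (Nat.log 2 τ)
  have hlog : ((2 ^ Nat.log 2 τ : ℕ) : ℝ) ≤ τ := by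
    exact_mod_cast Nat.pow_log_le_self 2 (by omega)
  have h1 := Real.rpow_le_rpow (by positivity) hlog (by norm_num : (0 : ℝ) ≤ 1 / 2)
  have h2 := Real.rpow_le_rpow (by positivity) hlog (by norm_num : (0 : ℝ) ≤ 3 / 4)
  rw [← Finset.Ico_add_one_right_eq_Icc, Nat.sub_add_cancel (by omega)]
  nlinarith [mul_le_mul_of_nonneg_left h1 ha, mul_le_mul_of_nonneg_left h2 hb]

/-- If the regret over every geometric covering interval `J` is at most
`a·|J|^{1/2} + b·|J|^{3/4}`, then the regret over any interval `[s, s+τ-1] ⊆ [T]`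
is at most `8a·τ^{1/2} + 6b·τ^{3/4}`. -/
theorem strongly_adaptive_regret_from_covering (R : Finset ℕ → ℝ) (a b : ℝ)
    (ha : 0 ≤ a) (hb : 0 ≤ b)
    (hsub : ∀ A B : Finset ℕ, Disjoint A B → R (A ∪ B) ≤ R A + R B)
    (hGC : ∀ J ∈ GCIntervals,
      R J ≤ a * (J.card : ℝ) ^ ((1 : ℝ) / 2) + b * (J.card : ℝ) ^ ((3 : ℝ) / 4))
    (T s τ : ℕ) (hs : 1 ≤ s) (hτ : 1 ≤ τ) (hT : s + τ - 1 ≤ T) :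
    R (Finset.Icc s (s + τ - 1)) ≤
      8 * a * (τ : ℝ) ^ ((1 : ℝ) / 2) + 6 * b * (τ : ℝ) ^ ((3 : ℝ) / 4) :=
  strongly_adaptive_regret_from_covering_general R a b ha hb hsub hGC s τ hτ
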